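/- arXiv:2106.04756 — 3 statements merged into one kernel-verified Lean document; each statement's English description precedes it below -/
import Mathlib

section
/- Scale invariance of PDHG with the scale-invariant primal weight (Proposition 1): Suppose K̂ = γK, ĉ = γα_y c, q̂ = γα_x q, X̂ = α_x·X := {α_x x : x ∈ X}, and Ŷ = Y, for scalars α_y, α_x, γ > 0, where ‖c‖₂ > 0 and ‖q‖₂ > 0 (hence also ‖ĉ‖₂, ‖q̂‖₂ > 0). Let ω = ‖c‖₂/‖q‖₂ and ω̂ = ‖ĉ‖₂/‖q̂‖₂, fix any step size η > 0 and set η̂ = η/γ. Let (x^k, y^k) be the PDHG iterates for the data (K, c, q, X, Y) with parameters (η, ω), and let (x̂^k, ŷ^k) be the PDHG iterates for the data (K̂, ĉ, q̂, X̂, Ŷ) with parameters (η̂, ω̂). If x̂⁰ = α_x x⁰ and ŷ⁰ = α_y y⁰, then x̂^k = α_x x^k and ŷ^k = α_y y^k for all k ≥ 0. -/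
/-!
Scaling commutes with metric projection, `α • P_S v = P_{α • S} (α • v)`, and `α • Y = Y` for a
cone `Y` and `α > 0`. Since `ω̂ = (αy / αx) ω` and `η̂ = η / γ`, the point projected in each scaled
update is exactly `αx` (resp. `αy`) times the point projected in the original update, so
uniqueness of projections onto convex sets gives the claim by induction on `k`.
-/

open Pointwise

/-- `p` is the Euclidean metric projection of `v` onto the set `S`. -/
def IsProj {E : Type*} [NormedAddCommGroup E] (S : Set E) (v p : E) : Prop :=
  p ∈ S ∧ ∀ w ∈ S, dist v p ≤ dist v w

open scoped InnerProductSpace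

namespace IsProj

variable {E : Type*}

theorem smul [NormedAddCommGroup E] [NormedSpace ℝ E] {S : Set E} {v p : E}
    (h : IsProj S v p) (α : ℝ) : IsProj (α • S) (α • v) (α • p) := by
  refine ⟨Set.smul_mem_smul_set h.1, ?_⟩
  rintro _ ⟨w, hw, rfl⟩
  rw [dist_smul₀, dist_smul₀]
  exact mul_le_mul_of_nonneg_left (h.2 w hw) (norm_nonneg α)

variable [NormedAddCommGroup E] [InnerProductSpace ℝ E] {S : Set E} {v p p' : E}

theorem inner_le_zero (hS : Convex ℝ S) (h : IsProj S v p) :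
    ∀ w ∈ S, ⟪v - p, w - p⟫_ℝ ≤ 0 := by
  have : Nonempty S := ⟨⟨p, h.1⟩⟩
  refine (norm_eq_iInf_iff_real_inner_le_zero hS h.1).mp (le_antisymm ?_ ?_)
  · exact le_ciInf fun w => by simpa only [dist_eq_norm] using h.2 w w.2
  · exact ciInf_le ⟨0, Set.forall_mem_range.2 fun _ => norm_nonneg _⟩ (⟨p, h.1⟩ : S)

theorem unique (hS : Convex ℝ S) (h : IsProj S v p) (h' : IsProj S v p') : p = p' := by
  have hp := h.inner_le_zero hS p' h'.1
  have hp' := h'.inner_le_zero hS p h.1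
  have : ⟪p' - p, p' - p⟫_ℝ ≤ 0 := by
    rw [← neg_sub p' p, inner_neg_right] at hp'
    calc ⟪p' - p, p' - p⟫_ℝ = ⟪v - p, p' - p⟫_ℝ - ⟪v - p', p' - p⟫_ℝ := by
          rw [← inner_sub_left, sub_sub_sub_cancel_left]
      _ ≤ 0 := by linarith
  exact (sub_eq_zero.mp (real_inner_self_nonpos.mp this)).symm

end IsProj

theorem smul_set_eq_self_of_cone {E : Type*} [AddCommGroup E] [Module ℝ E] {Y : Set E}
    (hY : ∀ t : ℝ, 0 ≤ t → ∀ y ∈ Y, t • y ∈ Y) {α : ℝ} (hα : 0 < α) : α • Y = Y := by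
  refine (Set.smul_set_subset_iff.2 fun y hy => hY α hα.le y hy).antisymm fun y hy => ?_
  exact ⟨α⁻¹ • y, hY _ (inv_nonneg.2 hα.le) y hy, smul_inv_smul₀ hα.ne' y⟩

theorem norm_smul_div_norm_smul {E F : Type*} [NormedAddCommGroup E] [NormedSpace ℝ E]
    [NormedAddCommGroup F] [NormedSpace ℝ F] (a b : ℝ) (u : E) (v : F) :
    ‖a • u‖ / ‖b • v‖ = ‖a‖ / ‖b‖ * (‖u‖ / ‖v‖) := by
  rw [norm_smul, norm_smul, div_mul_div_comm]

section

variable {E F : Type*} (η ω : ℝ) {γ αx αy : ℝ}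

theorem pdhg_primal_arg_smul [NormedAddCommGroup E] [InnerProductSpace ℝ E] [CompleteSpace E]
    [NormedAddCommGroup F] [InnerProductSpace ℝ F] [CompleteSpace F] (K : E →L[ℝ] F)
    (hγ : γ ≠ 0) (hαx : αx ≠ 0) (hαy : αy ≠ 0) (c x : E) (y : F) :
    αx • x - ((η / γ) / (αy / αx * ω)) •
        ((γ * αy) • c - ContinuousLinearMap.adjoint (γ • K) (αy • y))
      = αx • (x - (η / ω) • (c - ContinuousLinearMap.adjoint K y)) := by
  simp only [map_smul, smul_apply]
  match_scalars <;> field_simp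

theorem pdhg_dual_arg_smul [NormedAddCommGroup E] [NormedSpace ℝ E]
    [NormedAddCommGroup F] [NormedSpace ℝ F] (K : E →L[ℝ] F)
    (hγ : γ ≠ 0) (hαx : αx ≠ 0) (hαy : αy ≠ 0) (q : F) (x x' : E) (y : F) :
    αy • y + ((η / γ) * (αy / αx * ω)) •
        ((γ * αx) • q - (γ • K) ((2 : ℝ) • (αx • x') - αx • x))
      = αy • (y + (η * ω) • (q - K ((2 : ℝ) • x' - x))) := by
  simp only [map_smul, map_sub, smul_apply]
  match_scalars <;> field_simp

end

theorem pdhg_scale_invariance_general {n m : ℕ}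
    (K : EuclideanSpace ℝ (Fin n) →L[ℝ] EuclideanSpace ℝ (Fin m))
    (c : EuclideanSpace ℝ (Fin n)) (q : EuclideanSpace ℝ (Fin m))
    (X : Set (EuclideanSpace ℝ (Fin n))) (Y : Set (EuclideanSpace ℝ (Fin m)))
    (hXcv : Convex ℝ X)
    (hYcv : Convex ℝ Y)
    (hYcone : ∀ t : ℝ, 0 ≤ t → ∀ y ∈ Y, t • y ∈ Y)
    (γ αx αy : ℝ) (hγ : 0 < γ) (hαx : 0 < αx) (hαy : 0 < αy)
    (η : ℝ)
    (x xh : ℕ → EuclideanSpace ℝ (Fin n)) (y yh : ℕ → EuclideanSpace ℝ (Fin m))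
    -- PDHG iterates for the data (K, c, q, X, Y) with parameters (η, ω = ‖c‖/‖q‖):
    (hx : ∀ k, IsProj X
      (x k - (η / (‖c‖ / ‖q‖)) • (c - ContinuousLinearMap.adjoint K (y k))) (x (k + 1)))
    (hy : ∀ k, IsProj Y
      (y k + (η * (‖c‖ / ‖q‖)) • (q - K ((2 : ℝ) • x (k + 1) - x k))) (y (k + 1)))
    -- PDHG iterates for the scaled data (K̂, ĉ, q̂, X̂, Ŷ) with parameters (η̂ = η/γ, ω̂):
    (hxh : ∀ k, IsProj (αx • X)
      (xh k - ((η / γ) / (‖(γ * αy) • c‖ / ‖(γ * αx) • q‖)) •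
        ((γ * αy) • c - ContinuousLinearMap.adjoint (γ • K) (yh k))) (xh (k + 1)))
    (hyh : ∀ k, IsProj Y
      (yh k + ((η / γ) * (‖(γ * αy) • c‖ / ‖(γ * αx) • q‖)) •
        ((γ * αx) • q - (γ • K) ((2 : ℝ) • xh (k + 1) - xh k))) (yh (k + 1)))
    (hx0 : xh 0 = αx • x 0) (hy0 : yh 0 = αy • y 0) :
    ∀ k, xh k = αx • x k ∧ yh k = αy • y k := by
  have hω : ‖(γ * αy) • c‖ / ‖(γ * αx) • q‖ = αy / αx * (‖c‖ / ‖q‖) := by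
    rw [norm_smul_div_norm_smul, Real.norm_of_nonneg (by positivity),
      Real.norm_of_nonneg (by positivity), mul_div_mul_left _ _ hγ.ne']
  intro k
  induction k with
  | zero => exact ⟨hx0, hy0⟩
  | succ k ih =>
    obtain ⟨ihx, ihy⟩ := ih
    have hxs : xh (k + 1) = αx • x (k + 1) := by
      have h := hxh k
      rw [ihx, ihy, hω, pdhg_primal_arg_smul η _ K hγ.ne' hαx.ne' hαy.ne'] at h
      exact h.unique (hXcv.smul αx) ((hx k).smul αx)
    refine ⟨hxs, ?_⟩
    have h := hyh k
    rw [ihx, ihy, hxs, hω, pdhg_dual_arg_smul η _ K hγ.ne' hαx.ne' hαy.ne'] at h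
    have hyk := (hy k).smul αy
    rw [smul_set_eq_self_of_cone hYcone hαy] at hyk
    exact h.unique hYcv hyk

/-- **Scale invariance of PDHG with the scale-invariant primal weight** (Proposition 1).
With data `K̂ = γ • K`, `ĉ = (γ * αy) • c`, `q̂ = (γ * αx) • q`, `X̂ = αx • X`, `Ŷ = Y`,
primal weights `ω = ‖c‖/‖q‖`, `ω̂ = ‖ĉ‖/‖q̂‖`, step sizes `η` and `η̂ = η/γ`, if the
initial iterates satisfy `x̂⁰ = αx • x⁰` and `ŷ⁰ = αy • y⁰`, then `x̂ᵏ = αx • xᵏ` and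
`ŷᵏ = αy • yᵏ` for all `k`. -/
theorem pdhg_scale_invariance {n m : ℕ}
    (K : EuclideanSpace ℝ (Fin n) →L[ℝ] EuclideanSpace ℝ (Fin m))
    (c : EuclideanSpace ℝ (Fin n)) (q : EuclideanSpace ℝ (Fin m))
    (X : Set (EuclideanSpace ℝ (Fin n))) (Y : Set (EuclideanSpace ℝ (Fin m)))
    (hXne : X.Nonempty) (hXcl : IsClosed X) (hXcv : Convex ℝ X)
    (hYne : Y.Nonempty) (hYcl : IsClosed Y) (hYcv : Convex ℝ Y)
    (hYcone : ∀ t : ℝ, 0 ≤ t → ∀ y ∈ Y, t • y ∈ Y)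
    (γ αx αy : ℝ) (hγ : 0 < γ) (hαx : 0 < αx) (hαy : 0 < αy)
    (hc : 0 < ‖c‖) (hq : 0 < ‖q‖)
    (η : ℝ) (hη : 0 < η)
    (x xh : ℕ → EuclideanSpace ℝ (Fin n)) (y yh : ℕ → EuclideanSpace ℝ (Fin m))
    -- PDHG iterates for the data (K, c, q, X, Y) with parameters (η, ω = ‖c‖/‖q‖):
    (hx : ∀ k, IsProj X
      (x k - (η / (‖c‖ / ‖q‖)) • (c - ContinuousLinearMap.adjoint K (y k))) (x (k + 1)))
    (hy : ∀ k, IsProj Y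
      (y k + (η * (‖c‖ / ‖q‖)) • (q - K ((2 : ℝ) • x (k + 1) - x k))) (y (k + 1)))
    -- PDHG iterates for the scaled data (K̂, ĉ, q̂, X̂, Ŷ) with parameters (η̂ = η/γ, ω̂):
    (hxh : ∀ k, IsProj (αx • X)
      (xh k - ((η / γ) / (‖(γ * αy) • c‖ / ‖(γ * αx) • q‖)) •
        ((γ * αy) • c - ContinuousLinearMap.adjoint (γ • K) (yh k))) (xh (k + 1)))
    (hyh : ∀ k, IsProj Y
      (yh k + ((η / γ) * (‖(γ * αy) • c‖ / ‖(γ * αx) • q‖)) •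
        ((γ * αx) • q - (γ • K) ((2 : ℝ) • xh (k + 1) - xh k))) (yh (k + 1)))
    (hx0 : xh 0 = αx • x 0) (hy0 : yh 0 = αy • y 0) :
    ∀ k, xh k = αx • x k ∧ yh k = αy • y k :=
  pdhg_scale_invariance_general K c q X Y hXcv hYcv hYcone γ αx αy hγ hαx hαy η x xh y yh hx hy hxh
    hyh hx0 hy0
end

section
/- Lower bound on the adaptive step size candidate: Let K ∈ ℝ^{m×n} be a nonzero matrix, ω > 0, and let x, x' ∈ ℝⁿ and y, y' ∈ ℝᵐ be such that (y' − y)ᵀK(x' − x) > 0. Then the quantity η̄ = ‖(x' − x, y' − y)‖_ω² / (2(y' − y)ᵀK(x' − x)) satisfies η̄ ≥ 1/‖K‖₂. -/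
/-! Cauchy–Schwarz and the operator norm give `⟪v, K u⟫ ≤ ‖K‖ ‖u‖ ‖v‖`, and the weighted
AM–GM inequality `2ab ≤ ω a² + b²/ω` turns `2 ‖u‖ ‖v‖` into the squared `ω`-norm of `(u, v)`. -/

theorem two_mul_mul_le_mul_sq_add_sq_div {ω : ℝ} (hω : 0 < ω) (a b : ℝ) :
    2 * (a * b) ≤ ω * a ^ 2 + b ^ 2 / ω := by
  have hsq : ω * a ^ 2 + b ^ 2 / ω - 2 * (a * b) = (ω * a - b) ^ 2 / ω := by
    field_simp
    ring
  linarith [div_nonneg (sq_nonneg (ω * a - b)) hω.le]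

theorem real_inner_apply_le_opNorm_mul_norm_mul_norm
    {E F : Type*} [NormedAddCommGroup E] [InnerProductSpace ℝ E]
    [NormedAddCommGroup F] [InnerProductSpace ℝ F] (K : E →L[ℝ] F) (u : E) (v : F) :
    inner ℝ v (K u) ≤ ‖K‖ * ‖u‖ * ‖v‖ :=
  calc inner ℝ v (K u) ≤ ‖v‖ * ‖K u‖ := real_inner_le_norm v (K u)
    _ ≤ ‖v‖ * (‖K‖ * ‖u‖) := by gcongr; exact K.le_opNorm u
    _ = ‖K‖ * ‖u‖ * ‖v‖ := by ring

theorem two_mul_real_inner_apply_le_opNorm_mul_weighted_sq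
    {E F : Type*} [NormedAddCommGroup E] [InnerProductSpace ℝ E]
    [NormedAddCommGroup F] [InnerProductSpace ℝ F] (K : E →L[ℝ] F)
    {ω : ℝ} (hω : 0 < ω) (u : E) (v : F) :
    2 * inner ℝ v (K u) ≤ ‖K‖ * (ω * ‖u‖ ^ 2 + ‖v‖ ^ 2 / ω) :=
  calc 2 * inner ℝ v (K u) ≤ ‖K‖ * (2 * (‖u‖ * ‖v‖)) := by
        nlinarith [real_inner_apply_le_opNorm_mul_norm_mul_norm K u v]
    _ ≤ ‖K‖ * (ω * ‖u‖ ^ 2 + ‖v‖ ^ 2 / ω) := by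
        gcongr; exact two_mul_mul_le_mul_sq_add_sq_div hω _ _

/-- **Lower bound on the adaptive step size candidate.** For a nonzero linear map
`K : ℝⁿ → ℝᵐ`, `ω > 0`, and points with `(y' − y)ᵀK(x' − x) > 0`, the quantity
`η̄ = ‖(x'−x, y'−y)‖_ω² / (2 (y'−y)ᵀK(x'−x))` satisfies `η̄ ≥ 1/‖K‖₂`, where
`‖(x,y)‖_ω² = ω‖x‖₂² + ‖y‖₂²/ω` and `‖K‖` is the spectral (operator) norm. -/
theorem stepsize_candidate_lower_bound {n m : ℕ}
    (K : EuclideanSpace ℝ (Fin n) →L[ℝ] EuclideanSpace ℝ (Fin m)) (hK : K ≠ 0)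
    (ω : ℝ) (hω : 0 < ω)
    (x x' : EuclideanSpace ℝ (Fin n)) (y y' : EuclideanSpace ℝ (Fin m))
    (hpos : 0 < (inner ℝ (y' - y) (K (x' - x)) : ℝ)) :
    1 / ‖K‖ ≤ (ω * ‖x' - x‖ ^ 2 + ‖y' - y‖ ^ 2 / ω) /
      (2 * (inner ℝ (y' - y) (K (x' - x)) : ℝ)) := by
  rw [div_le_div_iff₀ (norm_pos_iff.mpr hK) (by positivity), one_mul]
  exact (two_mul_real_inner_apply_le_opNorm_mul_weighted_sq K hω _ _).trans_eq (mul_comm _ _)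
end

section
/- The normalized duality gap vanishes exactly at saddle points: Let X ⊆ ℝⁿ and Y ⊆ ℝᵐ be nonempty closed convex sets, Z = X × Y, ω > 0, z = (x, y) ∈ Z, and r > 0. Then ρ_r(z) = 0 if and only if z is a saddle point of L on X × Y, i.e. L(x, ŷ) ≤ L(x, y) ≤ L(x̂, y) for all x̂ ∈ X and ŷ ∈ Y. -/
/-- The Lagrangian `L(x, y) = cᵀx − yᵀKx + qᵀy` of the saddle-point problem. -/
noncomputable def Lagr {n m : ℕ}
    (K : EuclideanSpace ℝ (Fin n) →L[ℝ] EuclideanSpace ℝ (Fin m))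
    (c : EuclideanSpace ℝ (Fin n)) (q : EuclideanSpace ℝ (Fin m))
    (x : EuclideanSpace ℝ (Fin n)) (y : EuclideanSpace ℝ (Fin m)) : ℝ :=
  (inner ℝ c x : ℝ) - (inner ℝ y (K x) : ℝ) + (inner ℝ q y : ℝ)

/-- The weighted norm `‖(x, y)‖_ω = √(ω‖x‖₂² + ‖y‖₂²/ω)`. -/
noncomputable def wnorm {n m : ℕ} (ω : ℝ)
    (z : EuclideanSpace ℝ (Fin n) × EuclideanSpace ℝ (Fin m)) : ℝ :=
  Real.sqrt (ω * ‖z.1‖ ^ 2 + ‖z.2‖ ^ 2 / ω)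

/-!
The point `ẑ = z` contributes `0` and the gap function is bounded above on the bounded ball, so
`ρ_r(z) = 0` says exactly that `L(x, ŷ) ≤ L(x̂, y)` for every `ẑ` in `Z` within `ω`-distance `r`
of `z`. Taking `x̂ = x` (resp. `ŷ = y`), `y` is a local maximiser of the concave function
`L(x, ·)` on `Y` (resp. `x` a local minimiser of the convex function `L(·, y)` on `X`), and on a
convex set such local extrema are global.
-/

section Lagrangian

variable {n m : ℕ} (K : EuclideanSpace ℝ (Fin n) →L[ℝ] EuclideanSpace ℝ (Fin m))
  (c : EuclideanSpace ℝ (Fin n)) (q : EuclideanSpace ℝ (Fin m))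

lemma lagr_smul_add_smul_left {a b : ℝ} (hab : a + b = 1) (x x' : EuclideanSpace ℝ (Fin n))
    (y : EuclideanSpace ℝ (Fin m)) :
    Lagr K c q (a • x + b • x') y = a * Lagr K c q x y + b * Lagr K c q x' y := by
  simp only [Lagr, map_add, map_smul, inner_add_right, real_inner_smul_right]
  linear_combination (-inner ℝ q y) * hab

lemma lagr_smul_add_smul_right {a b : ℝ} (hab : a + b = 1) (x : EuclideanSpace ℝ (Fin n))
    (y y' : EuclideanSpace ℝ (Fin m)) :
    Lagr K c q x (a • y + b • y') = a * Lagr K c q x y + b * Lagr K c q x y' := by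
  simp only [Lagr, inner_add_left, inner_add_right, real_inner_smul_left, real_inner_smul_right]
  linear_combination (-inner ℝ c x) * hab

lemma convexOn_lagr_left {X : Set (EuclideanSpace ℝ (Fin n))} (hX : Convex ℝ X)
    (y : EuclideanSpace ℝ (Fin m)) : ConvexOn ℝ X (fun x ↦ Lagr K c q x y) :=
  ⟨hX, fun x _ x' _ _ _ _ _ hab ↦ (lagr_smul_add_smul_left K c q hab x x' y).le⟩

lemma concaveOn_lagr_right {Y : Set (EuclideanSpace ℝ (Fin m))} (hY : Convex ℝ Y)
    (x : EuclideanSpace ℝ (Fin n)) : ConcaveOn ℝ Y (Lagr K c q x) :=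
  ⟨hY, fun y _ y' _ _ _ _ _ hab ↦ (lagr_smul_add_smul_right K c q hab x y y').ge⟩

lemma continuous_lagr : Continuous (Function.uncurry (Lagr K c q)) := by
  unfold Function.uncurry Lagr
  fun_prop

end Lagrangian

section WeightedNorm

variable {n m : ℕ} {ω : ℝ}

lemma sqrt_mul_norm_fst_le_wnorm (hω : 0 ≤ ω)
    (w : EuclideanSpace ℝ (Fin n) × EuclideanSpace ℝ (Fin m)) : √ω * ‖w.1‖ ≤ wnorm ω w := by
  rw [← Real.sqrt_sq (norm_nonneg w.1), ← Real.sqrt_mul hω]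
  exact Real.sqrt_le_sqrt (le_add_of_nonneg_right (by positivity))

lemma norm_snd_div_sqrt_le_wnorm (hω : 0 ≤ ω)
    (w : EuclideanSpace ℝ (Fin n) × EuclideanSpace ℝ (Fin m)) : ‖w.2‖ / √ω ≤ wnorm ω w := by
  rw [← Real.sqrt_sq (norm_nonneg w.2), ← Real.sqrt_div' _ hω]
  exact Real.sqrt_le_sqrt (le_add_of_nonneg_left (by positivity))

lemma isBounded_setOf_wnorm_sub_le (hω : 0 < ω)
    (z : EuclideanSpace ℝ (Fin n) × EuclideanSpace ℝ (Fin m)) (r : ℝ) :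
    Bornology.IsBounded {w | wnorm ω (w - z) ≤ r} := by
  refine (Metric.isBounded_closedBall (x := z) (r := max (r / √ω) (r * √ω))).subset fun w hw ↦ ?_
  have hs : 0 < √ω := Real.sqrt_pos.2 hω
  have h₁ := sqrt_mul_norm_fst_le_wnorm hω.le (w - z)
  have h₂ := norm_snd_div_sqrt_le_wnorm hω.le (w - z)
  rw [Metric.mem_closedBall, dist_eq_norm, Prod.norm_def]
  refine max_le_max ?_ ?_
  · rw [le_div_iff₀' hs]
    exact h₁.trans hw
  · rw [← div_le_iff₀ hs]
    exact h₂.trans hw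

lemma wnorm_zero_mk (hω : 0 ≤ ω) (v : EuclideanSpace ℝ (Fin m)) :
    wnorm ω ((0 : EuclideanSpace ℝ (Fin n)), v) = ‖v‖ / √ω := by
  rw [wnorm, norm_zero, sq, zero_mul, mul_zero, zero_add, Real.sqrt_div' _ hω,
    Real.sqrt_sq (norm_nonneg v)]

lemma wnorm_mk_zero (hω : 0 ≤ ω) (u : EuclideanSpace ℝ (Fin n)) :
    wnorm ω (u, (0 : EuclideanSpace ℝ (Fin m))) = √ω * ‖u‖ := by
  rw [wnorm, norm_zero, sq 0, zero_mul, zero_div, add_zero, Real.sqrt_mul hω,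
    Real.sqrt_sq (norm_nonneg u)]

lemma wnorm_mk_sub_mk_le_of_mem_closedBall_snd (hω : 0 < ω) {r : ℝ}
    (x : EuclideanSpace ℝ (Fin n)) {y v : EuclideanSpace ℝ (Fin m)}
    (hv : v ∈ Metric.closedBall y (r * √ω)) : wnorm ω ((x, v) - (x, y)) ≤ r := by
  rw [Prod.mk_sub_mk, sub_self, wnorm_zero_mk hω.le, div_le_iff₀ (Real.sqrt_pos.2 hω)]
  rwa [Metric.mem_closedBall, dist_eq_norm] at hv

lemma wnorm_mk_sub_mk_le_of_mem_closedBall_fst (hω : 0 < ω) {r : ℝ}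
    {x u : EuclideanSpace ℝ (Fin n)} (y : EuclideanSpace ℝ (Fin m))
    (hu : u ∈ Metric.closedBall x (r / √ω)) : wnorm ω ((u, y) - (x, y)) ≤ r := by
  rw [Prod.mk_sub_mk, sub_self, wnorm_mk_zero hω.le, ← le_div_iff₀' (Real.sqrt_pos.2 hω)]
  rwa [Metric.mem_closedBall, dist_eq_norm] at hu

end WeightedNorm

lemma csSup_eq_iff_mem_upperBounds {α : Type*} [ConditionallyCompleteLattice α] {s : Set α}
    {a : α} (ha : a ∈ s) (hs : BddAbove s) : sSup s = a ↔ a ∈ upperBounds s :=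
  ⟨fun h ↦ h ▸ fun _ hb ↦ le_csSup hs hb, fun h ↦ IsGreatest.csSup_eq ⟨ha, h⟩⟩

theorem normalized_gap_eq_zero_iff_saddle_general {n m : ℕ}
    (K : EuclideanSpace ℝ (Fin n) →L[ℝ] EuclideanSpace ℝ (Fin m))
    (c : EuclideanSpace ℝ (Fin n)) (q : EuclideanSpace ℝ (Fin m))
    (X : Set (EuclideanSpace ℝ (Fin n))) (Y : Set (EuclideanSpace ℝ (Fin m)))
    (hXcv : Convex ℝ X)
    (hYcv : Convex ℝ Y)
    (ω r : ℝ) (hω : 0 < ω) (hr : 0 < r)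
    (x : EuclideanSpace ℝ (Fin n)) (y : EuclideanSpace ℝ (Fin m))
    (hx : x ∈ X) (hy : y ∈ Y) :
    let B : Set (EuclideanSpace ℝ (Fin n) × EuclideanSpace ℝ (Fin m)) :=
      {zh | zh ∈ X ×ˢ Y ∧ wnorm ω (zh - (x, y)) ≤ r}
    let Φ : EuclideanSpace ℝ (Fin n) × EuclideanSpace ℝ (Fin m) → ℝ :=
      fun zh => Lagr K c q x zh.2 - Lagr K c q zh.1 y
    ((1 / r) * sSup (Φ '' B) = 0 ↔
      (∀ yh ∈ Y, Lagr K c q x yh ≤ Lagr K c q x y) ∧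
        (∀ xh ∈ X, Lagr K c q x y ≤ Lagr K c q xh y)) := by
  intro B Φ
  have hcenter : (x, y) ∈ B := ⟨⟨hx, hy⟩, by simpa [wnorm] using hr.le⟩
  have hΦ : Continuous Φ :=
    ((continuous_lagr K c q).comp (continuous_const.prodMk continuous_snd)).sub
      ((continuous_lagr K c q).comp (continuous_fst.prodMk continuous_const))
  -- without this, `sSup` would be the junk value `0` and the forward direction would fail
  have hbdd : BddAbove (Φ '' B) :=
    ((isBounded_setOf_wnorm_sub_le hω (x, y) r).subset fun _ h ↦ h.2).isCompact_closure
      |>.bddAbove_image hΦ.continuousOn |>.mono (Set.image_mono subset_closure)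
  have hzero : (0 : ℝ) ∈ Φ '' B := ⟨(x, y), hcenter, sub_self _⟩
  rw [mul_eq_zero_iff_left (one_div_pos.2 hr).ne', csSup_eq_iff_mem_upperBounds hzero hbdd,
    mem_upperBounds, Set.forall_mem_image]
  constructor
  · intro hgap
    have hB : ∀ u ∈ X, ∀ v ∈ Y, wnorm ω ((u, v) - (x, y)) ≤ r →
        Lagr K c q x v ≤ Lagr K c q u y :=
      fun u hu v hv h ↦ sub_nonpos.1 (hgap ⟨⟨hu, hv⟩, h⟩)
    refine ⟨isMaxOn_iff.1 (.of_isLocalMaxOn_of_concaveOn hy ?_ (concaveOn_lagr_right K c q hYcv x)),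
      isMinOn_iff.1 (.of_isLocalMinOn_of_convexOn hx ?_ (convexOn_lagr_left K c q hXcv y))⟩
    · filter_upwards [self_mem_nhdsWithin,
        nhdsWithin_le_nhds (Metric.closedBall_mem_nhds y (by positivity : 0 < r * √ω))]
        with v hv hvr
      exact hB x hx v hv (wnorm_mk_sub_mk_le_of_mem_closedBall_snd hω x hvr)
    · filter_upwards [self_mem_nhdsWithin,
        nhdsWithin_le_nhds (Metric.closedBall_mem_nhds x (by positivity : 0 < r / √ω))]
        with u hu hur
      exact hB u hu y hy (wnorm_mk_sub_mk_le_of_mem_closedBall_fst hω y hur)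
  · rintro ⟨hmax, hmin⟩ ⟨u, v⟩ ⟨⟨hu, hv⟩, -⟩
    exact sub_nonpos.2 ((hmax v hv).trans (hmin u hu))

/-- **The normalized duality gap vanishes exactly at saddle points.** For nonempty
closed convex `X ⊆ ℝⁿ`, `Y ⊆ ℝᵐ`, `z = (x, y) ∈ Z = X × Y`, `ω > 0`, and `r > 0`,
the normalized duality gap `ρ_r(z) = (1/r)·sup {L(x, ŷ) − L(x̂, y) : ẑ = (x̂, ŷ) ∈ Z,
‖ẑ − z‖_ω ≤ r}` equals `0` if and only if `z` is a saddle point of `L` on `X × Y`: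
`L(x, ŷ) ≤ L(x, y) ≤ L(x̂, y)` for all `x̂ ∈ X`, `ŷ ∈ Y`. -/
theorem normalized_gap_eq_zero_iff_saddle {n m : ℕ}
    (K : EuclideanSpace ℝ (Fin n) →L[ℝ] EuclideanSpace ℝ (Fin m))
    (c : EuclideanSpace ℝ (Fin n)) (q : EuclideanSpace ℝ (Fin m))
    (X : Set (EuclideanSpace ℝ (Fin n))) (Y : Set (EuclideanSpace ℝ (Fin m)))
    (hXne : X.Nonempty) (hXcl : IsClosed X) (hXcv : Convex ℝ X)
    (hYne : Y.Nonempty) (hYcl : IsClosed Y) (hYcv : Convex ℝ Y)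
    (ω r : ℝ) (hω : 0 < ω) (hr : 0 < r)
    (x : EuclideanSpace ℝ (Fin n)) (y : EuclideanSpace ℝ (Fin m))
    (hx : x ∈ X) (hy : y ∈ Y) :
    let B : Set (EuclideanSpace ℝ (Fin n) × EuclideanSpace ℝ (Fin m)) :=
      {zh | zh ∈ X ×ˢ Y ∧ wnorm ω (zh - (x, y)) ≤ r}
    let Φ : EuclideanSpace ℝ (Fin n) × EuclideanSpace ℝ (Fin m) → ℝ :=
      fun zh => Lagr K c q x zh.2 - Lagr K c q zh.1 y
    ((1 / r) * sSup (Φ '' B) = 0 ↔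
      (∀ yh ∈ Y, Lagr K c q x yh ≤ Lagr K c q x y) ∧
        (∀ xh ∈ X, Lagr K c q x y ≤ Lagr K c q xh y)) :=
  normalized_gap_eq_zero_iff_saddle_general K c q X Y hXcv hYcv ω r hω hr x y hx hy
end
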